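/- arXiv:1805.06528 — 4 statements merged into one kernel-verified Lean document; each statement's English description precedes it below -/
import Mathlib

section
/- Let u : ℝ → ℝ be twice differentiable and positive, and let φ : ℝ → ℝ be twice differentiable satisfying λ·φ(x) = d(x)·φ''(x) - a(x)·φ'(x) + b(x)·φ(x) for all x, where u satisfies 0 = d(x)·u''(x) - a(x)·u'(x) + u(x)·(b(x) - c(x)·u(x)) for all x. Then ψ(x) := φ(x)/u(x) satisfies λ·ψ(x) = d(x)·ψ''(x) - a*(x)·ψ'(x) + c(x)·u(x)·ψ(x) for all x, where a*(x) := a(x) - 2·d(x)·u'(x)/u(x). -/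
/-!
Writing `φ = ψ u`, the eigenfunction equation for `φ` becomes, after the steady-state equation
`d u'' - a u' = -u (b - c u)` has absorbed the zeroth-order terms coming from `u''` and `u'`,
`λ ψ u = u (d ψ'' - (a - 2 d u'/u) ψ' + c u ψ)`; dividing by `u > 0` gives the claim.
-/

section QuotientDerivatives

variable {𝕜 : Type*} [NontriviallyNormedField 𝕜]

theorem HasDerivAt.div_sub_div_mul {f g : 𝕜 → 𝕜} {f' g' x : 𝕜} (hf : HasDerivAt f f' x)
    (hg : HasDerivAt g g' x) (hx : g x ≠ 0) :
    HasDerivAt (fun y => f y / g y) ((f' - f x / g x * g') / g x) x :=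
  (hf.div hg hx).congr_deriv (by field_simp)

variable {φ u φ' u' φ'' u'' : 𝕜 → 𝕜}

theorem deriv_div_eq_of_hasDerivAt (hφ' : ∀ x, HasDerivAt φ (φ' x) x)
    (hu' : ∀ x, HasDerivAt u (u' x) x) (hu : ∀ x, u x ≠ 0) :
    deriv (fun y => φ y / u y) = fun x => (φ' x - φ x / u x * u' x) / u x :=
  funext fun x => ((hφ' x).div_sub_div_mul (hu' x) (hu x)).deriv

theorem hasDerivAt_deriv_div (hφ' : ∀ x, HasDerivAt φ (φ' x) x)
    (hφ'' : ∀ x, HasDerivAt φ' (φ'' x) x) (hu' : ∀ x, HasDerivAt u (u' x) x)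
    (hu'' : ∀ x, HasDerivAt u' (u'' x) x) (hu : ∀ x, u x ≠ 0) (x : 𝕜) :
    HasDerivAt (deriv fun y => φ y / u y)
      ((φ'' x - 2 * deriv (fun y => φ y / u y) x * u' x - φ x / u x * u'' x) / u x) x := by
  have hψ : ∀ x, HasDerivAt (fun y => φ y / u y) ((φ' x - φ x / u x * u' x) / u x) x :=
    fun x => (hφ' x).div_sub_div_mul (hu' x) (hu x)
  have hnum : HasDerivAt (fun y => φ' y - φ y / u y * u' y)
      (φ'' x - ((φ' x - φ x / u x * u' x) / u x * u' x + φ x / u x * u'' x)) x :=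
    (hφ'' x).sub ((hψ x).mul (hu'' x))
  rw [deriv_div_eq_of_hasDerivAt hφ' hu' hu]
  exact (hnum.div_sub_div_mul (hu' x) (hu x)).congr_deriv (by ring)

end QuotientDerivatives

theorem stmt_3 (d a b c : ℝ → ℝ) (u u' u'' φ φ' φ'' : ℝ → ℝ) (lam : ℝ)
    (hu_pos : ∀ x, 0 < u x)
    (hu' : ∀ x, HasDerivAt u (u' x) x) (hu'' : ∀ x, HasDerivAt u' (u'' x) x)
    (hφ' : ∀ x, HasDerivAt φ (φ' x) x) (hφ'' : ∀ x, HasDerivAt φ' (φ'' x) x)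
    (heig : ∀ x, lam * φ x = d x * φ'' x - a x * φ' x + b x * φ x)
    (hss : ∀ x, 0 = d x * u'' x - a x * u' x + u x * (b x - c x * u x)) :
    ∀ x, lam * (φ x / u x) =
      d x * deriv (deriv (fun y => φ y / u y)) x
        - (a x - 2 * d x * u' x / u x) * deriv (fun y => φ y / u y) x
        + c x * u x * (φ x / u x) := by
  have hu : ∀ x, u x ≠ 0 := fun x => (hu_pos x).ne'
  intro x
  rw [(hasDerivAt_deriv_div hφ' hφ'' hu' hu'' hu x).deriv,
    deriv_div_eq_of_hasDerivAt hφ' hu' hu]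
  field_simp [hu x]
  linear_combination (u x) ^ 2 * heig x - φ x * u x * hss x
end

section
/- Let f₁(x,u₁,u₂) = u₁·(a₁₁(x)·(1-u₁) - a₁₂(x)·(1-u₂)) with 0 ≤ a₁₂(x) ≤ D₁ for all x, and define F₁(x,u₁,u₂) = f₁(x,u₁,u₂) + D₁·max(-u₁,0)·u₂. Then for each fixed x, u₁ ∈ [-1,2], the function u₂ ↦ F₁(x,u₁,u₂) is nondecreasing on [0,2]. -/
theorem stmt_6 (a₁₁ a₁₂ : ℝ → ℝ) (D₁ : ℝ)
    (ha₁₂ : ∀ x, 0 ≤ a₁₂ x ∧ a₁₂ x ≤ D₁)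
    (f₁ F₁ : ℝ → ℝ → ℝ → ℝ)
    (hf₁ : ∀ x u₁ u₂, f₁ x u₁ u₂ = u₁ * (a₁₁ x * (1 - u₁) - a₁₂ x * (1 - u₂)))
    (hF₁ : ∀ x u₁ u₂, F₁ x u₁ u₂ = f₁ x u₁ u₂ + D₁ * max (-u₁) 0 * u₂) :
    ∀ x u₁, u₁ ∈ Set.Icc (-1 : ℝ) 2 →
      MonotoneOn (fun u₂ => F₁ x u₁ u₂) (Set.Icc (0 : ℝ) 2) := by
  intro x u₁ hu₁ a _ b _ hab
  simp only [hF₁, hf₁]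
  obtain ⟨h1, h2⟩ := ha₁₂ x
  rcases le_or_gt 0 u₁ with h | h
  · rw [max_eq_right (by linarith)]
    nlinarith [mul_nonneg h1 (mul_nonneg h (sub_nonneg.2 hab))]
  · rw [max_eq_left (by linarith)]
    nlinarith [mul_nonneg (mul_nonneg (by linarith : (0:ℝ) ≤ -u₁) (by linarith : (0:ℝ) ≤ D₁ - a₁₂ x)) (sub_nonneg.2 hab)]
end

section
/- Let w(t,x) := û(x) + η·e^{(λ̂/2)·t}·φ̂(x) where û, φ̂ : ℝ → ℝ are smooth with φ̂ > 0, λ̂ > 0, and η > 0 a constant. Suppose û satisfies 0 = d(x)·û'' - a(x)·û' + f(x,û) and φ̂ satisfies λ̂·φ̂ = d(x)·φ̂'' - a(x)·φ̂' + f_u(x,û)·φ̂, and f(x,u) is quadratic in u: f(x,u) = α(x)·u - β(x)·u² with β continuous on [0,L] and periodic. If 0 < η ≤ λ̂·e^{-(λ̂/2)·t} / (2·max_{[0,L]}(β·φ̂)) for all t in a time interval [0,T], then w_t ≤ d(x)·w_xx - a(x)·w_x + f(x,w) on (0,T] × ℝ, i.e., w is a subsolution. -/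
theorem stmt_13 (d a α β uh uh' uh'' ph ph' ph'' : ℝ → ℝ)
    (lamhat η T L : ℝ) (hlam : 0 < lamhat) (hη : 0 < η) (hT : 0 < T) (hL : 0 < L)
    (hφpos : ∀ x, 0 < ph x)
    (hβc : Continuous β) (hφc : Continuous ph)
    (hβp : ∀ x, β (x + L) = β x) (hφp : ∀ x, ph (x + L) = ph x)
    (huh' : ∀ x, HasDerivAt uh (uh' x) x) (huh'' : ∀ x, HasDerivAt uh' (uh'' x) x)
    (hph' : ∀ x, HasDerivAt ph (ph' x) x) (hph'' : ∀ x, HasDerivAt ph' (ph'' x) x)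
    (hss : ∀ x, 0 = d x * uh'' x - a x * uh' x + (α x * uh x - β x * (uh x) ^ 2))
    (heig : ∀ x, lamhat * ph x =
      d x * ph'' x - a x * ph' x + (α x - 2 * β x * uh x) * ph x)
    (hηsmall : ∀ t ∈ Set.Icc (0 : ℝ) T,
      η ≤ lamhat * Real.exp (-(lamhat / 2) * t) /
        (2 * sSup ((fun x => β x * ph x) '' Set.Icc 0 L))) :
    ∀ t ∈ Set.Ioc (0 : ℝ) T, ∀ x : ℝ,
      (lamhat / 2) * η * Real.exp ((lamhat / 2) * t) * ph x ≤
        d x * (uh'' x + η * Real.exp ((lamhat / 2) * t) * ph'' x)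
          - a x * (uh' x + η * Real.exp ((lamhat / 2) * t) * ph' x)
          + (α x * (uh x + η * Real.exp ((lamhat / 2) * t) * ph x)
              - β x * (uh x + η * Real.exp ((lamhat / 2) * t) * ph x) ^ 2) := by
  intro t ht x
  set g : ℝ → ℝ := fun x => β x * ph x with hg
  set M : ℝ := sSup (g '' Set.Icc 0 L) with hM
  have hper : Function.Periodic g L := fun y => by simp [hg, hβp y, hφp y]
  -- bound g x ≤ M
  have hbdd : BddAbove (g '' Set.Icc 0 L) :=
    ((isCompact_Icc).image (hβc.mul hφc)).bddAbove
  have hgleM : ∀ y, g y ≤ M := by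
    intro y
    obtain ⟨z, hz, hzy⟩ := hper.exists_mem_Ico₀ hL y
    rw [hzy]
    exact le_csSup hbdd ⟨z, Set.mem_Icc.2 ⟨hz.1, hz.2.le⟩, rfl⟩
  -- M > 0
  have hMpos : 0 < M := by
    by_contra h
    push_neg at h
    have h0 := hηsmall 0 ⟨le_refl 0, hT.le⟩
    rcases lt_or_eq_of_le h with h | h
    · have : lamhat * Real.exp (-(lamhat / 2) * 0) / (2 * M) < 0 :=
        div_neg_of_pos_of_neg (by positivity) (by linarith)
      linarith
    · rw [h] at h0; simp at h0
      linarith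
  have hEM : η * Real.exp ((lamhat / 2) * t) * M ≤ lamhat / 2 := by
    have h1 := hηsmall t ⟨ht.1.le, ht.2⟩
    rw [le_div_iff₀ (by positivity)] at h1
    have he : Real.exp (-(lamhat / 2) * t) * Real.exp ((lamhat / 2) * t) = 1 := by
      rw [← Real.exp_add]; ring_nf; exact Real.exp_zero
    nlinarith [Real.exp_pos ((lamhat / 2) * t), Real.exp_pos (-(lamhat / 2) * t)]
  have hgx : g x ≤ M := hgleM x
  have hE : 0 < η * Real.exp ((lamhat / 2) * t) := by positivity
  have hφ := hφpos x
  have hkey : η * Real.exp ((lamhat / 2) * t) * (β x * ph x) ≤ lamhat / 2 := by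
    calc η * Real.exp ((lamhat / 2) * t) * (β x * ph x)
        ≤ η * Real.exp ((lamhat / 2) * t) * M := by
          exact mul_le_mul_of_nonneg_left hgx hE.le
      _ ≤ lamhat / 2 := hEM
  nlinarith [hss x, heig x, mul_le_mul_of_nonneg_left hkey (mul_nonneg hE.le hφ.le),
    mul_pos hE hφ]
end

section
/- Let U : ℝ × ℝ → ℝ² be bounded with lim_{z→-∞} U(x,z) = (0,0) and lim_{z→+∞} U(x,z) = (1,1) uniformly in x, and suppose that for some constant γ, lim_{n→∞} U(z, z + γ·n) = W(z) uniformly in z ∈ ℝ for some function W : ℝ → ℝ² which connects (0,0) to (1,1), i.e., W(z) → (0,0) as z → -∞ and W(z) → (1,1) as z → +∞. Then γ = 0. -/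
lemma const_of_dist_lt {c d : ℝ × ℝ} (h : ∀ ε > (0:ℝ), dist c d < ε) : c = d := by
  by_contra hne
  have : dist c d > 0 := dist_pos.mpr hne
  exact absurd (h _ this) (lt_irrefl _)

theorem stmt_14 (U : ℝ → ℝ → ℝ × ℝ) (W : ℝ → ℝ × ℝ) (γ : ℝ)
    (hbdd : ∃ C, ∀ x z, ‖U x z‖ ≤ C)
    (hlo : ∀ ε > (0 : ℝ), ∃ M : ℝ, ∀ x z, z ≤ -M → dist (U x z) ((0 : ℝ), (0 : ℝ)) < ε)
    (hhi : ∀ ε > (0 : ℝ), ∃ M : ℝ, ∀ x z, M ≤ z → dist (U x z) ((1 : ℝ), (1 : ℝ)) < ε)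
    (hunif : ∀ ε > (0 : ℝ), ∃ N : ℕ, ∀ n : ℕ, N ≤ n → ∀ z : ℝ,
      dist (U z (z + γ * n)) (W z) < ε)
    (hWlo : Filter.Tendsto W Filter.atBot (nhds ((0 : ℝ), (0 : ℝ))))
    (hWhi : Filter.Tendsto W Filter.atTop (nhds ((1 : ℝ), (1 : ℝ)))) :
    γ = 0 := by
  by_contra hγ
  have h01 : ((0:ℝ), (0:ℝ)) ≠ ((1:ℝ), (1:ℝ)) := by simp
  rcases lt_or_gt_of_ne hγ with hneg | hpos
  · -- γ < 0: z + γ n → -∞, so W z = (0,0) for all z, contradicting hWhi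
    have key : ∀ z, W z = ((0:ℝ), (0:ℝ)) := by
      intro z
      apply const_of_dist_lt
      intro ε hε
      obtain ⟨N, hN⟩ := hunif (ε/2) (by linarith)
      obtain ⟨M, hM⟩ := hlo (ε/2) (by linarith)
      obtain ⟨n, hn1, hn2⟩ : ∃ n : ℕ, N ≤ n ∧ z + γ * n ≤ -M := by
        obtain ⟨n, hn⟩ := exists_nat_ge (max (N:ℝ) ((-M - z)/γ))
        refine ⟨n, ?_, ?_⟩
        · exact_mod_cast (le_max_left _ _).trans hn
        · have h2 : (-M - z)/γ ≤ n := (le_max_right _ _).trans hn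
          have := (div_le_iff_of_neg hneg).mp h2
          linarith
      calc dist (W z) ((0:ℝ),(0:ℝ))
          ≤ dist (W z) (U z (z + γ * n)) + dist (U z (z + γ * n)) ((0:ℝ),(0:ℝ)) :=
            dist_triangle _ _ _
        _ < ε/2 + ε/2 := by
            have h1 := hN n hn1 z
            have h2 := hM z (z + γ * n) hn2
            rw [dist_comm] at h1
            linarith
        _ = ε := by ring
    have : Filter.Tendsto W Filter.atTop (nhds ((0:ℝ),(0:ℝ))) := by
      simp only [funext key]; exact tendsto_const_nhds
    exact h01 (tendsto_nhds_unique this hWhi)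
  · -- γ > 0: W z = (1,1) for all z, contradicting hWlo
    have key : ∀ z, W z = ((1:ℝ), (1:ℝ)) := by
      intro z
      apply const_of_dist_lt
      intro ε hε
      obtain ⟨N, hN⟩ := hunif (ε/2) (by linarith)
      obtain ⟨M, hM⟩ := hhi (ε/2) (by linarith)
      obtain ⟨n, hn1, hn2⟩ : ∃ n : ℕ, N ≤ n ∧ M ≤ z + γ * n := by
        obtain ⟨n, hn⟩ := exists_nat_ge (max (N:ℝ) ((M - z)/γ))
        refine ⟨n, ?_, ?_⟩
        · exact_mod_cast (le_max_left _ _).trans hn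
        · have h2 : (M - z)/γ ≤ n := (le_max_right _ _).trans hn
          have := (div_le_iff₀ hpos).mp h2
          linarith
      calc dist (W z) ((1:ℝ),(1:ℝ))
          ≤ dist (W z) (U z (z + γ * n)) + dist (U z (z + γ * n)) ((1:ℝ),(1:ℝ)) :=
            dist_triangle _ _ _
        _ < ε/2 + ε/2 := by
            have h1 := hN n hn1 z
            have h2 := hM z (z + γ * n) hn2
            rw [dist_comm] at h1
            linarith
        _ = ε := by ring
    have : Filter.Tendsto W Filter.atBot (nhds ((1:ℝ),(1:ℝ))) := by
      simp only [funext key]; exact tendsto_const_nhds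
    exact h01 (tendsto_nhds_unique hWlo this)
end
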